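/- There exists a universal constant C such that the following holds. Let E ⊂ ℝ² be a finite set, f : E → [0, ∞), x, x′ ∈ ℝ², M ≥ 0, and let k₁, k₂ be nonnegative integers with k₁ ≥ 4k₂. Given P ∈ Γ₊^♯(x, k₁, M), there exists P′ ∈ Γ₊^♯(x′, k₂, M) such that |∂^α(P − P′)(x)| ≤ C·M·|x − x′|^{2−|α|} and |∂^α(P − P′)(x′)| ≤ C·M·|x − x′|^{2−|α|} for all multi-indices α with |α| ≤ 1. -/

import Mathlib

noncomputable section

/-- The plane `ℝ²` with the Euclidean metric. -/
abbrev V2 : Type := EuclideanSpace ℝ (Fin 2)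

/-- Partial derivative of `F : ℝ² → ℝ` in the `i`-th coordinate direction. -/
noncomputable def pd (i : Fin 2) (F : V2 → ℝ) : V2 → ℝ :=
  fun x => fderiv ℝ F x (EuclideanSpace.single i 1)

/-- `Σ_{|α| ≤ 2} |∂^α F(x)|²`, the sum over all multi-indices `α` of order at most `2`. -/
noncomputable def c2SqAt (F : V2 → ℝ) (x : V2) : ℝ :=
  (F x) ^ 2 + (pd 0 F x) ^ 2 + (pd 1 F x) ^ 2 +
    (pd 0 (pd 0 F) x) ^ 2 + (pd 0 (pd 1 F) x) ^ 2 + (pd 1 (pd 1 F) x) ^ 2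

/-- `‖F‖_{C²(ℝ²)} := sup_x (Σ_{|α|≤2} |∂^α F(x)|²)^{1/2} ≤ M`. -/
def C2NormLE (F : V2 → ℝ) (M : ℝ) : Prop :=
  ∀ x : V2, Real.sqrt (c2SqAt F x) ≤ M

/-- The 1-jet of `F` at `x`: `𝒥_x F (y) = F(x) + ∇F(x) · (y − x)`. -/
noncomputable def jet (x : V2) (F : V2 → ℝ) : V2 → ℝ :=
  fun y => F x + fderiv ℝ F x (y - x)

/-- `Γ₊(x, S, M)`: the 1-jets at `x` of nonnegative `C²` functions `F` with
`‖F‖_{C²(ℝ²)} ≤ M` and `F = f` on `S`. -/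
def GammaPlus (f : V2 → ℝ) (x : V2) (S : Finset V2) (M : ℝ) : Set (V2 → ℝ) :=
  {P | ∃ F : V2 → ℝ, ContDiff ℝ 2 F ∧ (∀ y : V2, 0 ≤ F y) ∧ C2NormLE F M ∧
        (∀ y ∈ S, F y = f y) ∧ jet x F = P}

/-- `σ(x, S)`: the 1-jets at `x` of `C²` functions `F` with `‖F‖_{C²(ℝ²)} ≤ 1` and
`F = 0` on `S`. -/
def sigmaSet (x : V2) (S : Finset V2) : Set (V2 → ℝ) :=
  {P | ∃ F : V2 → ℝ, ContDiff ℝ 2 F ∧ (∀ y ∈ S, F y = 0) ∧ C2NormLE F 1 ∧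
        jet x F = P}

/-- `Γ₊^♯(x, k, M) := ⋂_{S ⊆ E, #S ≤ k} Γ₊(x, S, M)`. -/
def GammaPlusSharp (E : Finset V2) (f : V2 → ℝ) (x : V2) (k : ℕ) (M : ℝ) :
    Set (V2 → ℝ) :=
  {P | ∀ S : Finset V2, S ⊆ E → S.card ≤ k → P ∈ GammaPlus f x S M}

/-- `σ^♯(x, k) := ⋂_{S ⊆ E, #S ≤ k} σ(x, S)`. -/
def sigmaSharp (E : Finset V2) (x : V2) (k : ℕ) : Set (V2 → ℝ) :=
  {P | ∀ S : Finset V2, S ⊆ E → S.card ≤ k → P ∈ sigmaSet x S}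

/-!
A 1-jet at `x'` is determined by its value and derivative, a point of the 3-dimensional space
`ℝ × (ℝ² →L[ℝ] ℝ)`. For every `S ⊆ E` with `#S ≤ k₂`, the jets at `x'` of the nonnegative
extensions of `f|_S` with `C²` norm at most `M` form a convex set; so does the box of jets whose
value and derivative are within `4M|x - x'|²` and `4M|x - x'|` of those of `P`. Any four of these
sets meet: the union of four such `S` has at most `4k₂ ≤ k₁` points, and by Taylor's theorem the
jet at `x'` of a function witnessing `P ∈ Γ₊(x, S₁ ∪ ⋯ ∪ S₄, M)` lies in all four. By Helly's
theorem all of them meet, and a common point is the required `P'`.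
-/

open Set Metric Module

section General

theorem EuclideanSpace.opNorm_le_sum_norm_apply_single {ι F : Type*} [Fintype ι] [DecidableEq ι]
    [SeminormedAddCommGroup F] [NormedSpace ℝ F] (L : EuclideanSpace ℝ ι →L[ℝ] F) :
    ‖L‖ ≤ ∑ i, ‖L (EuclideanSpace.single i 1)‖ := by
  refine L.opNorm_le_bound (Finset.sum_nonneg fun i _ => norm_nonneg _) fun v => ?_
  have hv : ∑ i, v i • EuclideanSpace.single i (1 : ℝ) = v := by
    simpa using (EuclideanSpace.basisFun ι ℝ).sum_repr v
  calc ‖L v‖ = ‖∑ i, v i • L (EuclideanSpace.single i 1)‖ := by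
        conv_lhs => rw [← hv]
        simp only [map_sum, map_smul]
    _ ≤ ∑ i, ‖v‖ * ‖L (EuclideanSpace.single i 1)‖ :=
        norm_sum_le_of_le _ fun i _ => by
          rw [norm_smul]; gcongr; exact PiLp.norm_apply_le v i
    _ = (∑ i, ‖L (EuclideanSpace.single i 1)‖) * ‖v‖ := by
        rw [Finset.sum_mul]; simp only [mul_comm]

variable {E G : Type*} [NormedAddCommGroup E] [NormedSpace ℝ E]
  [NormedAddCommGroup G] [NormedSpace ℝ G] {f : E → G} {K : ℝ}

theorem norm_fderiv_sub_le_of_norm_fderiv_fderiv_le (hf : ContDiff ℝ 2 f)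
    (hK : ∀ z, ‖fderiv ℝ (fderiv ℝ f) z‖ ≤ K) (y z : E) :
    ‖fderiv ℝ f y - fderiv ℝ f z‖ ≤ K * ‖y - z‖ :=
  convex_univ.norm_image_sub_le_of_norm_fderiv_le
    (fun w _ => (hf.fderiv_right (m := 1) le_rfl).differentiable one_ne_zero w)
    (fun w _ => hK w) (mem_univ z) (mem_univ y)

theorem norm_sub_sub_fderiv_le_of_norm_fderiv_fderiv_le (hf : ContDiff ℝ 2 f)
    (hK : ∀ z, ‖fderiv ℝ (fderiv ℝ f) z‖ ≤ K) (x y : E) :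
    ‖f y - f x - fderiv ℝ f x (y - x)‖ ≤ K * ‖y - x‖ ^ 2 := by
  have hK₀ : 0 ≤ K := (norm_nonneg (fderiv ℝ (fderiv ℝ f) x)).trans (hK x)
  have hbound : ∀ z ∈ closedBall x ‖y - x‖, ‖fderiv ℝ f z - fderiv ℝ f x‖ ≤ K * ‖y - x‖ :=
    fun z hz => (norm_fderiv_sub_le_of_norm_fderiv_fderiv_le hf hK z x).trans
      (mul_le_mul_of_nonneg_left (mem_closedBall_iff_norm.1 hz) hK₀)
  calc ‖f y - f x - fderiv ℝ f x (y - x)‖ ≤ K * ‖y - x‖ * ‖y - x‖ :=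
        (convex_closedBall x ‖y - x‖).norm_image_sub_le_of_norm_fderiv_le'
          (fun z _ => hf.differentiable two_ne_zero z) hbound
          (mem_closedBall_self (norm_nonneg _)) (mem_closedBall_iff_norm.2 le_rfl)
    _ = K * ‖y - x‖ ^ 2 := by ring

end General

theorem exists_mem_forall_of_helly {V α : Type*} [AddCommGroup V] [Module ℝ V]
    [FiniteDimensional ℝ V] [DecidableEq α] {B : Set V} {A : Finset α → Set V} (E : Finset α)
    (k : ℕ) (hB : Convex ℝ B) (hA : ∀ S, Convex ℝ (A S)) (hA_anti : Antitone A)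
    (hBA : ∀ T ⊆ E, T.card ≤ (finrank ℝ V + 1) * k → (B ∩ A T).Nonempty) :
    ∃ p ∈ B, ∀ S ⊆ E, S.card ≤ k → p ∈ A S := by
  set s := E.powerset.filter fun S => S.card ≤ k
  have hs : ∀ {S}, S ∈ s ↔ S ⊆ E ∧ S.card ≤ k := by simp [s]
  have hinter : ∀ I ⊆ s, I.card ≤ finrank ℝ V + 1 → (⋂ S ∈ I, B ∩ A S).Nonempty := by
    intro I hIs hI
    have hIE : ∀ S ∈ I, S ⊆ E ∧ S.card ≤ k := fun S hS => hs.1 (hIs hS)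
    obtain ⟨p, hpB, hpA⟩ := hBA (I.biUnion id)
      (Finset.biUnion_subset.2 fun S hS => (hIE S hS).1)
      (Finset.card_biUnion_le.trans <| (Finset.sum_le_card_nsmul _ _ k
        fun S hS => (hIE S hS).2).trans <| by rw [smul_eq_mul]; exact Nat.mul_le_mul_right k hI)
    exact ⟨p, mem_iInter₂.2 fun S hS => ⟨hpB, hA_anti (Finset.subset_biUnion_of_mem id hS) hpA⟩⟩
  obtain ⟨p, hp⟩ := Convex.helly_theorem' (fun S _ => hB.inter (hA S)) hinter
  have hp : ∀ S ⊆ E, S.card ≤ k → p ∈ B ∩ A S := fun S hSE hS =>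
    mem_iInter₂.1 hp S (hs.2 ⟨hSE, hS⟩)
  exact ⟨p, (hp ∅ E.empty_subset (by simp)).1, fun S hSE hS => (hp S hSE hS).2⟩

section C2

variable {F G : V2 → ℝ} {M : ℝ}

theorem C2NormLE.abs_le_of_sq_le (h : C2NormLE F M) {y : V2} {t : ℝ} (ht : t ^ 2 ≤ c2SqAt F y) :
    |t| ≤ M :=
  (Real.abs_le_sqrt ht).trans (h y)

theorem differentiable_pd (hF : ContDiff ℝ 2 F) (i : Fin 2) : Differentiable ℝ (pd i F) :=
  ((hF.fderiv_right (m := 1) le_rfl).clm_apply contDiff_const).differentiable one_ne_zero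

theorem pd_pd_eq_fderiv_fderiv (hF : ContDiff ℝ 2 F) (i j : Fin 2) (y : V2) :
    pd i (pd j F) y =
      fderiv ℝ (fderiv ℝ F) y (EuclideanSpace.single i 1) (EuclideanSpace.single j 1) := by
  have hd : DifferentiableAt ℝ (fderiv ℝ F) y :=
    (hF.fderiv_right (m := 1) le_rfl).differentiable one_ne_zero y
  show fderiv ℝ (fun z => fderiv ℝ F z (EuclideanSpace.single j 1)) y _ = _
  rw [fderiv_clm_apply hd (differentiableAt_const _)]
  simp

theorem C2NormLE.abs_fderiv_fderiv_single_le (hF : ContDiff ℝ 2 F) (h : C2NormLE F M)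
    (y : V2) (i j : Fin 2) :
    |fderiv ℝ (fderiv ℝ F) y (EuclideanSpace.single i 1) (EuclideanSpace.single j 1)| ≤ M := by
  have hcomm : pd 1 (pd 0 F) y = pd 0 (pd 1 F) y := by
    rw [pd_pd_eq_fderiv_fderiv hF, pd_pd_eq_fderiv_fderiv hF,
      hF.contDiffAt.isSymmSndFDerivAt (by simp)]
  refine h.abs_le_of_sq_le (y := y) ?_
  fin_cases i <;> fin_cases j <;>
    simp only [Fin.zero_eta, Fin.mk_one, ← pd_pd_eq_fderiv_fderiv hF, hcomm] <;>
    unfold c2SqAt <;> linarith [sq_nonneg (F y), sq_nonneg (pd 0 F y), sq_nonneg (pd 1 F y),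
      sq_nonneg (pd 0 (pd 0 F) y), sq_nonneg (pd 0 (pd 1 F) y), sq_nonneg (pd 1 (pd 1 F) y)]

theorem C2NormLE.norm_fderiv_fderiv_le (hF : ContDiff ℝ 2 F) (h : C2NormLE F M) (y : V2) :
    ‖fderiv ℝ (fderiv ℝ F) y‖ ≤ 4 * M :=
  calc ‖fderiv ℝ (fderiv ℝ F) y‖
      ≤ ∑ i, ∑ j, ‖fderiv ℝ (fderiv ℝ F) y (EuclideanSpace.single i 1)
          (EuclideanSpace.single j 1)‖ :=
        (EuclideanSpace.opNorm_le_sum_norm_apply_single _).trans <| Finset.sum_le_sum fun i _ =>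
          EuclideanSpace.opNorm_le_sum_norm_apply_single _
    _ ≤ ∑ _i : Fin 2, ∑ _j : Fin 2, M :=
        Finset.sum_le_sum fun i _ => Finset.sum_le_sum fun j _ =>
          h.abs_fderiv_fderiv_single_le hF y i j
    _ = 4 * M := by rw [Fin.sum_univ_two, Fin.sum_univ_two]; ring

end C2

section Convexity

variable {F G : V2 → ℝ} {M : ℝ}

theorem pd_smul_add_smul (hF : Differentiable ℝ F) (hG : Differentiable ℝ G) (a b : ℝ)
    (i : Fin 2) : pd i (a • F + b • G) = a • pd i F + b • pd i G := by
  funext y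
  simp [pd, fderiv_add ((hF y).const_smul a) ((hG y).const_smul b), fderiv_const_smul (hF y),
    fderiv_const_smul (hG y)]

def c2Vec (F : V2 → ℝ) (y : V2) : EuclideanSpace ℝ (Fin 6) :=
  !₂[F y, pd 0 F y, pd 1 F y, pd 0 (pd 0 F) y, pd 0 (pd 1 F) y, pd 1 (pd 1 F) y]

theorem norm_c2Vec (F : V2 → ℝ) (y : V2) : ‖c2Vec F y‖ = √(c2SqAt F y) := by
  simp [c2Vec, EuclideanSpace.norm_eq, Fin.sum_univ_six, c2SqAt, add_assoc]

theorem c2Vec_smul_add_smul (hF : ContDiff ℝ 2 F) (hG : ContDiff ℝ 2 G) (a b : ℝ) (y : V2) :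
    c2Vec (a • F + b • G) y = a • c2Vec F y + b • c2Vec G y := by
  have hF₁ := hF.differentiable two_ne_zero
  have hG₁ := hG.differentiable two_ne_zero
  ext j
  fin_cases j <;>
    simp [c2Vec, pd_smul_add_smul hF₁ hG₁,
      pd_smul_add_smul (differentiable_pd hF _) (differentiable_pd hG _)]

theorem C2NormLE.smul_add_smul (hF : ContDiff ℝ 2 F) (hG : ContDiff ℝ 2 G) (hFM : C2NormLE F M)
    (hGM : C2NormLE G M) {a b : ℝ} (ha : 0 ≤ a) (hb : 0 ≤ b) (hab : a + b = 1) :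
    C2NormLE (a • F + b • G) M := by
  intro y
  have hFy := hFM y
  have hGy := hGM y
  rw [← norm_c2Vec] at hFy hGy ⊢
  calc ‖c2Vec (a • F + b • G) y‖ = ‖a • c2Vec F y + b • c2Vec G y‖ := by
        rw [c2Vec_smul_add_smul hF hG]
    _ ≤ a * ‖c2Vec F y‖ + b * ‖c2Vec G y‖ := by
        refine (norm_add_le _ _).trans_eq ?_
        rw [norm_smul, norm_smul, Real.norm_of_nonneg ha, Real.norm_of_nonneg hb]
    _ ≤ a * M + b * M := by gcongr
    _ = M := by rw [← add_mul, hab, one_mul]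

end Convexity

def nonnegExtensions (f : V2 → ℝ) (M : ℝ) (S : Finset V2) : Set (V2 → ℝ) :=
  {F | ContDiff ℝ 2 F ∧ (∀ y, 0 ≤ F y) ∧ C2NormLE F M ∧ ∀ y ∈ S, F y = f y}

theorem mem_GammaPlus_iff {f : V2 → ℝ} {x : V2} {S : Finset V2} {M : ℝ} {P : V2 → ℝ} :
    P ∈ GammaPlus f x S M ↔ ∃ F ∈ nonnegExtensions f M S, jet x F = P := by
  simp [GammaPlus, nonnegExtensions, and_assoc]

theorem nonnegExtensions_anti (f : V2 → ℝ) (M : ℝ) : Antitone (nonnegExtensions f M) :=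
  fun _ _ hST _ ⟨hF, hpos, hM, hS⟩ => ⟨hF, hpos, hM, fun y hy => hS y (hST hy)⟩

theorem convex_nonnegExtensions (f : V2 → ℝ) (M : ℝ) (S : Finset V2) :
    Convex ℝ (nonnegExtensions f M S) := by
  rintro F ⟨hF, hFpos, hFM, hFS⟩ G ⟨hG, hGpos, hGM, hGS⟩ a b ha hb hab
  refine ⟨(hF.const_smul a).add (hG.const_smul b),
    fun y => add_nonneg (mul_nonneg ha (hFpos y)) (mul_nonneg hb (hGpos y)),
    hFM.smul_add_smul hF hG hGM ha hb hab, fun y hy => ?_⟩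
  simp only [Pi.add_apply, Pi.smul_apply, smul_eq_mul, hFS y hy, hGS y hy, ← add_mul, hab,
    one_mul]

section Jets

def jetPair (x : V2) (F : V2 → ℝ) : ℝ × (V2 →L[ℝ] ℝ) := (F x, fderiv ℝ F x)

theorem finrank_jetPair_space : finrank ℝ (ℝ × (V2 →L[ℝ] ℝ)) = 3 := by
  rw [finrank_prod, ← LinearMap.toContinuousLinearMap.finrank_eq]
  simp

theorem jet_eq_of_jetPair_eq {x : V2} {F G : V2 → ℝ} (h : jetPair x F = jetPair x G) :
    jet x F = jet x G := by
  obtain ⟨hval, hderiv⟩ := Prod.ext_iff.1 h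
  funext y
  exact congrArg₂ (fun c (L : V2 →L[ℝ] ℝ) => c + L (y - x)) hval hderiv

theorem Convex.image_jetPair {s : Set (V2 → ℝ)} (hs : Convex ℝ s)
    (hd : ∀ F ∈ s, Differentiable ℝ F) (x : V2) : Convex ℝ (jetPair x '' s) := by
  rintro _ ⟨F, hF, rfl⟩ _ ⟨G, hG, rfl⟩ a b ha hb hab
  refine ⟨a • F + b • G, hs hF hG ha hb hab, Prod.ext rfl ?_⟩
  exact fderiv_add ((hd F hF x).const_smul a) ((hd G hG x).const_smul b) |>.trans <| by
    rw [fderiv_const_smul (hd F hF x), fderiv_const_smul (hd G hG x)]; rfl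

theorem hasFDerivAt_jet (x : V2) (F : V2 → ℝ) (z : V2) :
    HasFDerivAt (jet x F) (fderiv ℝ F x) z := by
  have h := ((fderiv ℝ F x).hasFDerivAt.comp z ((hasFDerivAt_id z).sub_const x)).const_add (F x)
  rwa [ContinuousLinearMap.comp_id] at h

theorem jet_apply_sub_jet_apply (x x' : V2) (F G : V2 → ℝ) (y : V2) :
    jet x F y - jet x' G y = (jet x F x' - G x') + (fderiv ℝ F x - fderiv ℝ G x') (y - x') := by
  simp only [jet, sub_apply, map_sub]
  ring

theorem abs_pd_jet_sub_jet_le {x x' : V2} {F G : V2 → ℝ} {r : ℝ}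
    (h : ‖fderiv ℝ F x - fderiv ℝ G x'‖ ≤ r) (i : Fin 2) (z : V2) :
    |pd i (jet x F - jet x' G) z| ≤ r := by
  rw [pd, ((hasFDerivAt_jet x F z).sub (hasFDerivAt_jet x' G z)).fderiv]
  refine le_trans ?_ h
  simpa using (fderiv ℝ F x - fderiv ℝ G x').le_opNorm (EuclideanSpace.single i 1)

theorem jetPair_mem_closedBall_prod {F : V2 → ℝ} {M : ℝ} (hF : ContDiff ℝ 2 F)
    (h : C2NormLE F M) (x x' : V2) :
    jetPair x' F ∈ closedBall (jet x F x') (4 * M * ‖x - x'‖ ^ 2) ×ˢ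
      closedBall (fderiv ℝ F x) (4 * M * ‖x - x'‖) := by
  have hK := h.norm_fderiv_fderiv_le hF
  refine ⟨?_, ?_⟩
  · rw [mem_closedBall, Real.dist_eq, norm_sub_rev x x']
    simpa [jetPair, jet, sub_sub] using norm_sub_sub_fderiv_le_of_norm_fderiv_fderiv_le hF hK x x'
  · rw [mem_closedBall, dist_eq_norm, norm_sub_rev x x']
    exact norm_fderiv_sub_le_of_norm_fderiv_fderiv_le hF hK x' x

end Jets

theorem exists_jetPair_forall_of_mem_GammaPlusSharp {E : Finset V2} {f : V2 → ℝ} {x x' : V2}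
    {k₁ k₂ : ℕ} {M : ℝ} (hk : 4 * k₂ ≤ k₁) {F₀ : V2 → ℝ}
    (hP : jet x F₀ ∈ GammaPlusSharp E f x k₁ M) :
    ∃ p ∈ closedBall (jet x F₀ x') (4 * M * ‖x - x'‖ ^ 2) ×ˢ
        closedBall (fderiv ℝ F₀ x) (4 * M * ‖x - x'‖),
      ∀ S ⊆ E, S.card ≤ k₂ → p ∈ jetPair x' '' nonnegExtensions f M S := by
  classical
  refine exists_mem_forall_of_helly E k₂ ((convex_closedBall _ _).prod (convex_closedBall _ _))
    (fun S => (convex_nonnegExtensions f M S).image_jetPair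
      (fun F hF => hF.1.differentiable two_ne_zero) x')
    (fun S T hST => image_mono (nonnegExtensions_anti f M hST)) fun T hTE hT => ?_
  rw [finrank_jetPair_space] at hT
  obtain ⟨F, ⟨hF, hFpos, hFM, hFT⟩, hFP⟩ := mem_GammaPlus_iff.1 (hP T hTE (hT.trans hk))
  have hderiv : fderiv ℝ F x = fderiv ℝ F₀ x := by
    rw [← (hasFDerivAt_jet x F x).fderiv, ← (hasFDerivAt_jet x F₀ x).fderiv, hFP]
  refine ⟨jetPair x' F, ?_, F, ⟨hF, hFpos, hFM, hFT⟩, rfl⟩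
  rw [← hFP, ← hderiv]
  exact jetPair_mem_closedBall_prod hF hFM x x'

/-- **Lemma 4.2.** Jets in `Γ₊^♯(x, k₁, M)` are approximated, in the Whitney sense, by
jets in `Γ₊^♯(x′, k₂, M)` whenever `k₁ ≥ 4k₂`. -/
theorem GammaPlusSharp_transfer :
    ∃ C : ℝ, 0 < C ∧
      ∀ (E : Finset V2) (f : V2 → ℝ), (∀ y ∈ E, 0 ≤ f y) →
      ∀ (x x' : V2) (k₁ k₂ : ℕ) (M : ℝ), 0 ≤ M → 4 * k₂ ≤ k₁ →
      ∀ P ∈ GammaPlusSharp E f x k₁ M,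
        ∃ P' ∈ GammaPlusSharp E f x' k₂ M,
          |P x - P' x| ≤ C * M * ‖x - x'‖ ^ 2 ∧
          |P x' - P' x'| ≤ C * M * ‖x - x'‖ ^ 2 ∧
          ∀ i : Fin 2,
            |pd i (P - P') x| ≤ C * M * ‖x - x'‖ ∧
            |pd i (P - P') x'| ≤ C * M * ‖x - x'‖ := by
  refine ⟨8, by norm_num, fun E f _ x x' k₁ k₂ M hM hk P hP => ?_⟩
  obtain ⟨F₀, -, rfl⟩ := mem_GammaPlus_iff.1 (hP ∅ E.empty_subset (by simp))
  obtain ⟨_, ⟨hval, hderiv⟩, hp⟩ := exists_jetPair_forall_of_mem_GammaPlusSharp hk hP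
  obtain ⟨G₀, -, rfl⟩ := hp ∅ E.empty_subset (by simp)
  refine ⟨jet x' G₀, fun S hSE hS => ?_, ?_⟩
  · obtain ⟨G, hG, hGp⟩ := hp S hSE hS
    exact mem_GammaPlus_iff.2 ⟨G, hG, jet_eq_of_jetPair_eq hGp⟩
  rw [mem_closedBall, Real.dist_eq, abs_sub_comm] at hval
  rw [mem_closedBall, dist_eq_norm, norm_sub_rev] at hderiv
  have hvalue : ∀ y,
      |jet x F₀ y - jet x' G₀ y| ≤ 4 * M * ‖x - x'‖ ^ 2 + 4 * M * ‖x - x'‖ * ‖y - x'‖ := by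
    intro y
    rw [jet_apply_sub_jet_apply]
    exact (abs_add_le _ _).trans (add_le_add hval
      (((fderiv ℝ F₀ x - fderiv ℝ G₀ x').le_opNorm _).trans (by gcongr; exact hderiv)))
  have hd := norm_nonneg (x - x')
  refine ⟨(hvalue x).trans_eq (by ring), (hvalue x').trans ?_, fun i =>
    ⟨(abs_pd_jet_sub_jet_le hderiv i x).trans (by nlinarith),
      (abs_pd_jet_sub_jet_le hderiv i x').trans (by nlinarith)⟩⟩
  rw [sub_self, norm_zero, mul_zero, add_zero]
  nlinarith
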